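/- Compatibility implies well-branchedness: if Π ⊢ G1 : ⟨φ1,Λ1⟩ and Π ⊢ G2 : ⟨φ2,Λ2⟩ are derivable for ground g-choreographies G1, G2 and compch(φ1,φ2,Π) holds, then ⟦G1⟧ and ⟦G2⟧ are well-branched (there is a unique active participant, all others are passive), and consequently ⟦G1+G2⟧ = ⟦G1⟧+⟦G2⟧ ≠ ⊥. -/

import Mathlib

open scoped Classical

namespace Choreo

/-! ## Labels -/

/-- Communication labels: output `A B!m` and input `A B?m`. -/
inductive Label (P M : Type) where
  | out : P → P → M → Label P M
  | inp : P → P → M → Label P M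

variable {P M : Type}

/-- The subject of a label: the sender of an output, the receiver of an input. -/
def Label.sbj : Label P M → P
  | .out a _ _ => a
  | .inp _ b _ => b

/-- The set `L^!` of output labels (sender and receiver distinct). -/
def Lout : Set (Label P M) := {l | ∃ a b m, a ≠ b ∧ l = .out a b m}

/-- The set `L^?` of input labels (sender and receiver distinct). -/
def Lin : Set (Label P M) := {l | ∃ a b m, a ≠ b ∧ l = .inp a b m}

/-- `L̂(A)`: the labels in `L` whose subject is `A`. -/
def hat (L : Set (Label P M)) (A : P) : Set (Label P M) := {l ∈ L | l.sbj = A}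

/-- `sbj(L)`: the set of subjects of the labels in `L`. -/
def sbjSet (L : Set (Label P M)) : Set P := Label.sbj '' L

/-- `L − Π`: the labels in `L` whose subject is not in `Π`. -/
def lminus (L : Set (Label P M)) (Γ : Set P) : Set (Label P M) := {l ∈ L | l.sbj ∉ Γ}

/-! ## Labelled event structures (events drawn from ℕ) -/

/-- Data of a labelled (prime) event structure over events drawn from `ℕ`. -/
structure ES (P M : Type) where
  ev : Set ℕ
  le : ℕ → ℕ → Prop
  conf : ℕ → ℕ → Prop
  lbl : ℕ → Label P M

namespace ES

variable (E : ES P M)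

/-- Configurations: downward-closed conflict-free sets of events. -/
def Config (x : Set ℕ) : Prop :=
  x ⊆ E.ev ∧ (∀ e ∈ x, ∀ f ∈ E.ev, E.le f e → f ∈ x) ∧
    ∀ e ∈ x, ∀ f ∈ x, ¬ E.conf e f

/-- `MaxC E`: the ⊆-maximal configurations of `E`. -/
def MaxC : Set (Set ℕ) := {x | E.Config x ∧ ∀ y, E.Config y → x ⊆ y → y = x}

/-- Minimal events of `s ⊆ E.ev` with respect to `E.le`. -/
def minIn (s : Set ℕ) : Set ℕ := {e ∈ s | ∀ f ∈ s, E.le f e → f = e}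

/-- Maximal events of `s ⊆ E.ev` with respect to `E.le`. -/
def maxIn (s : Set ℕ) : Set ℕ := {e ∈ s | ∀ f ∈ s, E.le e f → f = e}

def minEv : Set ℕ := E.minIn E.ev
def maxEv : Set ℕ := E.maxIn E.ev

/-- Labels of the minimal events of `E`. -/
def minLbl : Set (Label P M) := E.lbl '' E.minEv

/-- Labels of the maximal events of `E`. -/
def maxLbl : Set (Label P M) := E.lbl '' E.maxEv

/-- All labels occurring in `E`. -/
def lblSet : Set (Label P M) := E.lbl '' E.ev

/-- The projection `E↾A`: the restriction of `E` to the events whose label has subject `A`. -/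
def proj (A : P) : ES P M where
  ev := {e ∈ E.ev | (E.lbl e).sbj = A}
  le u v := E.le u v ∧ (u ∈ E.ev ∧ (E.lbl u).sbj = A) ∧ (v ∈ E.ev ∧ (E.lbl v).sbj = A)
  conf u v := E.conf u v ∧ (u ∈ E.ev ∧ (E.lbl u).sbj = A) ∧ (v ∈ E.ev ∧ (E.lbl v).sbj = A)
  lbl := E.lbl

/-- The projection `x↾A` of a configuration (as a set of events of `E`). -/
def projC (x : Set ℕ) (A : P) : Set ℕ := {e ∈ x | (E.lbl e).sbj = A}

end ES

/-! ## Constructions on event structures -/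

/-- Tag for the events of a left component. -/
def tagL (e : ℕ) : ℕ := Nat.pair 0 e
/-- Tag for the events of a right component. -/
def tagR (e : ℕ) : ℕ := Nat.pair 1 e
/-- Tag for the events of the copy of the second component indexed by (the code of) a
maximal configuration of the first one. -/
def tagC (k e : ℕ) : ℕ := Nat.pair 1 (Nat.pair k e)

/-- A code (injective on finite sets) of sets of naturals. -/
noncomputable def encSet (x : Set ℕ) : ℕ :=
  if h : x.Finite then h.toFinset.sum (fun n => 2 ^ n) else 0

/-- The empty event structure `ε`. -/
noncomputable def esEmpty [Nonempty P] [Nonempty M] : ES P M where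
  ev := ∅
  le _ _ := False
  conf _ _ := False
  lbl _ := Label.out Classical.ofNonempty Classical.ofNonempty Classical.ofNonempty

/-- `⟦A→B:m⟧`: two ordered events labelled `A B!m < A B?m`. -/
def esAct (a b : P) (m : M) : ES P M where
  ev := {0, 1}
  le u v := (u = 0 ∧ v = 0) ∨ (u = 0 ∧ v = 1) ∨ (u = 1 ∧ v = 1)
  conf _ _ := False
  lbl e := if e = 0 then Label.out a b m else Label.inp a b m

/-- Tensor product `E1 ⊗ E2` (componentwise disjoint union). -/
def esTensor (E1 E2 : ES P M) : ES P M where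
  ev := (tagL '' E1.ev) ∪ (tagR '' E2.ev)
  le u v := (∃ e ∈ E1.ev, ∃ f ∈ E1.ev, E1.le e f ∧ u = tagL e ∧ v = tagL f) ∨
            (∃ e ∈ E2.ev, ∃ f ∈ E2.ev, E2.le e f ∧ u = tagR e ∧ v = tagR f)
  conf u v := (∃ e ∈ E1.ev, ∃ f ∈ E1.ev, E1.conf e f ∧ u = tagL e ∧ v = tagL f) ∨
              (∃ e ∈ E2.ev, ∃ f ∈ E2.ev, E2.conf e f ∧ u = tagR e ∧ v = tagR f)
  lbl u := if (Nat.unpair u).1 = 0 then E1.lbl (Nat.unpair u).2 else E2.lbl (Nat.unpair u).2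

/-- Sum `E1 + E2`: disjoint union with all cross pairs of events in conflict. -/
def esSum (E1 E2 : ES P M) : ES P M :=
  { esTensor E1 E2 with
    conf := fun u v => (esTensor E1 E2).conf u v ∨
      (∃ e ∈ E1.ev, ∃ f ∈ E2.ev, (u = tagL e ∧ v = tagR f) ∨ (u = tagR f ∧ v = tagL e)) }

/-- Sequential composition: appends to each maximal configuration `x` of `E1` a disjoint
copy of `E2`, ordering an event of `x` below an event of the copy whenever their labels
have the same subject. -/
noncomputable def esSeq (E1 E2 : ES P M) : ES P M where
  ev := (tagL '' E1.ev) ∪ {u | ∃ x ∈ E1.MaxC, ∃ e ∈ E2.ev, u = tagC (encSet x) e}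
  le u v :=
    (∃ e ∈ E1.ev, ∃ f ∈ E1.ev, E1.le e f ∧ u = tagL e ∧ v = tagL f) ∨
    (∃ x ∈ E1.MaxC, ∃ e ∈ E2.ev, ∃ f ∈ E2.ev, E2.le e f ∧
       u = tagC (encSet x) e ∧ v = tagC (encSet x) f) ∨
    (∃ x ∈ E1.MaxC, ∃ e ∈ x, ∃ f ∈ E2.ev, (E1.lbl e).sbj = (E2.lbl f).sbj ∧
       u = tagL e ∧ v = tagC (encSet x) f)
  conf u v :=
    (∃ e ∈ E1.ev, ∃ f ∈ E1.ev, E1.conf e f ∧ u = tagL e ∧ v = tagL f) ∨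
    (∃ x ∈ E1.MaxC, ∃ e ∈ E2.ev, ∃ f ∈ E2.ev, E2.conf e f ∧
       u = tagC (encSet x) e ∧ v = tagC (encSet x) f) ∨
    (∃ x ∈ E1.MaxC, ∃ x' ∈ E1.MaxC, x ≠ x' ∧ ∃ e ∈ E2.ev, ∃ f ∈ E2.ev,
       u = tagC (encSet x) e ∧ v = tagC (encSet x') f) ∨
    (∃ x ∈ E1.MaxC, ∃ e ∈ E1.ev, (∃ e' ∈ x, E1.conf e e') ∧ ∃ f ∈ E2.ev,
       ((u = tagL e ∧ v = tagC (encSet x) f) ∨ (u = tagC (encSet x) f ∧ v = tagL e)))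
  lbl u := if (Nat.unpair u).1 = 0 then E1.lbl (Nat.unpair u).2
           else E2.lbl (Nat.unpair (Nat.unpair u).2).2

/-! ## Well-branchedness -/

/-- Labels of the minimal events of the projection `E↾A`. -/
def minLblP (E : ES P M) (A : P) : Set (Label P M) := (E.proj A).minLbl

/-- `A` is active for the branches `E1`, `E2`. -/
def active (E1 E2 : ES P M) (A : P) : Prop :=
  minLblP E1 A ≠ ∅ ∧ minLblP E2 A ≠ ∅ ∧
  Disjoint (minLblP E1 A) (minLblP E2 A) ∧
  minLblP E1 A ∪ minLblP E2 A ⊆ Lout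

/-- `B` is passive for the branches `E1`, `E2`. -/
def passive (E1 E2 : ES P M) (B : P) : Prop :=
  Disjoint (minLblP E1 B) (minLblP E2 B) ∧
  minLblP E1 B ∪ minLblP E2 B ⊆ Lin ∧
  (minLblP E1 B = ∅ ↔ minLblP E2 B = ∅)

/-- Well-branchedness: a unique active participant, all other participants passive. -/
def wb (E1 E2 : ES P M) : Prop :=
  ∃ A, active E1 E2 A ∧ (∀ A', active E1 E2 A' → A' = A) ∧
    ∀ B, B ≠ A → passive E1 E2 B

/-! ## Ground g-choreographies and their semantics -/

/-- Ground g-choreographies: `G ::= 0 | A→B:m | G;G | G|G | G+G`. -/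
inductive GC (P M : Type) where
  | nil : GC P M
  | act : P → P → M → GC P M
  | seq : GC P M → GC P M → GC P M
  | par : GC P M → GC P M → GC P M
  | cho : GC P M → GC P M → GC P M

/-- `P(G)`: the participants occurring in `G`. -/
def parts : GC P M → Set P
  | .nil => ∅
  | .act a b _ => {a, b}
  | .seq g1 g2 => parts g1 ∪ parts g2
  | .par g1 g2 => parts g1 ∪ parts g2
  | .cho g1 g2 => parts g1 ∪ parts g2

/-- The semantics `⟦G⟧`: a labelled event structure, or `none` (i.e. `⊥`) when a side
condition fails (the grammar requires `A ≠ B` in interactions; parallel requires disjoint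
label sets; choice requires well-branchedness). -/
noncomputable def gsem [Nonempty P] [Nonempty M] : GC P M → Option (ES P M)
  | .nil => some esEmpty
  | .act a b m => if a = b then none else some (esAct a b m)
  | .seq g1 g2 =>
      match gsem g1, gsem g2 with
      | some E1, some E2 => some (esSeq E1 E2)
      | _, _ => none
  | .par g1 g2 =>
      match gsem g1, gsem g2 with
      | some E1, some E2 =>
          if Disjoint E1.lblSet E2.lblSet then some (esTensor E1 E2) else none
      | _, _ => none
  | .cho g1 g2 =>
      match gsem g1, gsem g2 with
      | some E1, some E2 => if wb E1 E2 then some (esSum E1 E2) else none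
      | _, _ => none

/-! ## The typing system -/

/-- Output uniform sets of labels. -/
def outUniform (U V : Set (Label P M)) : Prop := Disjoint U V ∧ U ∪ V ⊆ Lout

/-- Input uniform sets of labels. -/
def inUniform (U V : Set (Label P M)) : Prop := Disjoint U V ∧ U ∪ V ⊆ Lin

/-- The compatibility condition `compch(φ1,φ2,Π)` of rule t-ch. -/
def compch (φ1 φ2 : Set (Label P M)) (Γ : Set P) : Prop :=
  ∃ A ∈ Γ,
    (outUniform (hat φ1 A) (hat φ2 A) ∧ hat φ1 A ≠ ∅ ∧ hat φ2 A ≠ ∅) ∧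
    (∀ A' ∈ Γ, (outUniform (hat φ1 A') (hat φ2 A') ∧ hat φ1 A' ≠ ∅ ∧ hat φ2 A' ≠ ∅) →
        A' = A) ∧
    ∀ B ∈ Γ, B ≠ A →
      inUniform (hat φ1 B) (hat φ2 B) ∧ (hat φ1 B = ∅ ↔ hat φ2 B = ∅)

/-- The typing judgement `Π ⊢ G : ⟨φ,Λ⟩`. -/
inductive Typing : Set P → GC P M → Set (Label P M) → Set (Label P M) → Prop where
  | temp : Typing ∅ GC.nil ∅ ∅
  | tint {a b : P} {m : M} (hab : a ≠ b) :
      Typing {a, b} (GC.act a b m)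
        {Label.out a b m, Label.inp a b m} {Label.out a b m, Label.inp a b m}
  | tseq {Γ1 Γ2 : Set P} {g1 g2 : GC P M} {φ1 φ2 Λ1 Λ2 : Set (Label P M)} :
      Typing Γ1 g1 φ1 Λ1 → Typing Γ2 g2 φ2 Λ2 →
      Typing (Γ1 ∪ Γ2) (GC.seq g1 g2) (φ1 ∪ lminus φ2 Γ1) (Λ2 ∪ lminus Λ1 Γ2)
  | tpar {Γ1 Γ2 : Set P} {g1 g2 : GC P M} {φ1 φ2 Λ1 Λ2 : Set (Label P M)} :
      Typing Γ1 g1 φ1 Λ1 → Typing Γ2 g2 φ2 Λ2 → Γ1 ∩ Γ2 = ∅ →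
      Typing (Γ1 ∪ Γ2) (GC.par g1 g2) (φ1 ∪ φ2) (Λ1 ∪ Λ2)
  | tch {Γ : Set P} {g1 g2 : GC P M} {φ1 φ2 Λ1 Λ2 : Set (Label P M)} :
      Typing Γ g1 φ1 Λ1 → Typing Γ g2 φ2 Λ2 → compch φ1 φ2 Γ →
      Typing Γ (GC.cho g1 g2) (φ1 ∪ φ2) (Λ1 ∪ Λ2)


/-! ## One-hole contexts and their typing (hole axiom `Γh ⊢ [·] : ⟨φh,Λh⟩`) -/

/-- g-choreography contexts with a single hole. -/
inductive Ctx (P M : Type) where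
  | hole : Ctx P M
  | seqL : Ctx P M → GC P M → Ctx P M
  | seqR : GC P M → Ctx P M → Ctx P M
  | parL : Ctx P M → GC P M → Ctx P M
  | parR : GC P M → Ctx P M → Ctx P M
  | choL : Ctx P M → GC P M → Ctx P M
  | choR : GC P M → Ctx P M → Ctx P M

/-- `C.fill g = C[g]`, the replacement of the hole of `C` by `g`. -/
def Ctx.fill : Ctx P M → GC P M → GC P M
  | .hole, g => g
  | .seqL c g2, g => GC.seq (c.fill g) g2
  | .seqR g1 c, g => GC.seq g1 (c.fill g)
  | .parL c g2, g => GC.par (c.fill g) g2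
  | .parR g1 c, g => GC.par g1 (c.fill g)
  | .choL c g2, g => GC.cho (c.fill g) g2
  | .choR g1 c, g => GC.cho g1 (c.fill g)

/-- Typing of one-hole contexts in the type system extended with the axiom
`Γh ⊢ [·] : ⟨φh,Λh⟩` for the hole. -/
inductive CTyping (Γh : Set P) (φh Λh : Set (Label P M)) :
    Set P → Ctx P M → Set (Label P M) → Set (Label P M) → Prop where
  | hole : CTyping Γh φh Λh Γh Ctx.hole φh Λh
  | seqL {Γ1 Γ2 : Set P} {c : Ctx P M} {g : GC P M} {φ1 φ2 Λ1 Λ2 : Set (Label P M)} :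
      CTyping Γh φh Λh Γ1 c φ1 Λ1 → Typing Γ2 g φ2 Λ2 →
      CTyping Γh φh Λh (Γ1 ∪ Γ2) (Ctx.seqL c g) (φ1 ∪ lminus φ2 Γ1) (Λ2 ∪ lminus Λ1 Γ2)
  | seqR {Γ1 Γ2 : Set P} {g : GC P M} {c : Ctx P M} {φ1 φ2 Λ1 Λ2 : Set (Label P M)} :
      Typing Γ1 g φ1 Λ1 → CTyping Γh φh Λh Γ2 c φ2 Λ2 →
      CTyping Γh φh Λh (Γ1 ∪ Γ2) (Ctx.seqR g c) (φ1 ∪ lminus φ2 Γ1) (Λ2 ∪ lminus Λ1 Γ2)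
  | parL {Γ1 Γ2 : Set P} {c : Ctx P M} {g : GC P M} {φ1 φ2 Λ1 Λ2 : Set (Label P M)} :
      CTyping Γh φh Λh Γ1 c φ1 Λ1 → Typing Γ2 g φ2 Λ2 → Γ1 ∩ Γ2 = ∅ →
      CTyping Γh φh Λh (Γ1 ∪ Γ2) (Ctx.parL c g) (φ1 ∪ φ2) (Λ1 ∪ Λ2)
  | parR {Γ1 Γ2 : Set P} {g : GC P M} {c : Ctx P M} {φ1 φ2 Λ1 Λ2 : Set (Label P M)} :
      Typing Γ1 g φ1 Λ1 → CTyping Γh φh Λh Γ2 c φ2 Λ2 → Γ1 ∩ Γ2 = ∅ →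
      CTyping Γh φh Λh (Γ1 ∪ Γ2) (Ctx.parR g c) (φ1 ∪ φ2) (Λ1 ∪ Λ2)
  | choL {Γ : Set P} {c : Ctx P M} {g : GC P M} {φ1 φ2 Λ1 Λ2 : Set (Label P M)} :
      CTyping Γh φh Λh Γ c φ1 Λ1 → Typing Γ g φ2 Λ2 → compch φ1 φ2 Γ →
      CTyping Γh φh Λh Γ (Ctx.choL c g) (φ1 ∪ φ2) (Λ1 ∪ Λ2)
  | choR {Γ : Set P} {g : GC P M} {c : Ctx P M} {φ1 φ2 Λ1 Λ2 : Set (Label P M)} :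
      Typing Γ g φ1 Λ1 → CTyping Γh φh Λh Γ c φ2 Λ2 → compch φ1 φ2 Γ →
      CTyping Γh φh Λh Γ (Ctx.choR g c) (φ1 ∪ φ2) (Λ1 ∪ Λ2)

/-! ## Refinable actions, t-ref, and refinement -/

/-- The three side conditions of the axiom schema t-ref for the refinable action
`A → m1…mn : B1,…,Bn`, represented by the initiator `A` and the nonempty list
`l = [(m1,B1),…,(mn,Bn)]` with pairwise distinct `Bi`. -/
def trefCond (Γ : Set P) (φ Λ : Set (Label P M)) (A : P) (l : List (M × P)) : Prop :=
  l ≠ [] ∧ (l.map Prod.snd).Nodup ∧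
  sbjSet φ = Γ ∧ sbjSet Λ = Γ ∧ sbjSet (φ ∩ Lout) = {A} ∧
  ∀ p ∈ l, ∃ C ∈ Γ, hat Λ p.2 = {Label.inp C p.2 p.1}

/-- `G ref A→m1…mn:B1,…,Bn`: the ground g-choreography `G` refines the refinable action
given by initiator `A` and list `l = [(m1,B1),…,(mn,Bn)]`. -/
def Refines [Nonempty P] [Nonempty M] (G : GC P M) (A : P) (l : List (M × P)) : Prop :=
  ∃ E : ES P M, gsem G = some E ∧
    sbjSet E.minLbl = {A} ∧
    ∀ x ∈ E.MaxC, ∀ p ∈ l, ∃ C ∈ parts G,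
      Label.inp C p.2 p.1 ∈ E.lbl '' (E.maxIn (E.projC x p.2))

/-! ## Multi-hole contexts -/

/-- g-choreography contexts with (numbered) holes. -/
inductive MCtx (P M : Type) where
  | hole : ℕ → MCtx P M
  | nil : MCtx P M
  | act : P → P → M → MCtx P M
  | seq : MCtx P M → MCtx P M → MCtx P M
  | par : MCtx P M → MCtx P M → MCtx P M
  | cho : MCtx P M → MCtx P M → MCtx P M

/-- The (indices of the) holes occurring in a multi-hole context. -/
def MCtx.holes : MCtx P M → List ℕ
  | .hole i => [i]
  | .nil => []
  | .act _ _ _ => []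
  | .seq c1 c2 => c1.holes ++ c2.holes
  | .par c1 c2 => c1.holes ++ c2.holes
  | .cho c1 c2 => c1.holes ++ c2.holes

/-- `C.fill g`: replace each hole `[·]i` by `g i`. -/
def MCtx.fill : MCtx P M → (ℕ → GC P M) → GC P M
  | .hole i, g => g i
  | .nil, _ => GC.nil
  | .act a b m, _ => GC.act a b m
  | .seq c1 c2, g => GC.seq (c1.fill g) (c2.fill g)
  | .par c1 c2, g => GC.par (c1.fill g) (c2.fill g)
  | .cho c1 c2, g => GC.cho (c1.fill g) (c2.fill g)

/-- Typing of multi-hole contexts in the extended type system, where hole `i` is typed by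
the axiom `(σ i).1 ⊢ [·]i : ⟨(σ i).2.1, (σ i).2.2⟩`. -/
inductive MTyping (σ : ℕ → Set P × Set (Label P M) × Set (Label P M)) :
    Set P → MCtx P M → Set (Label P M) → Set (Label P M) → Prop where
  | hole (i : ℕ) : MTyping σ (σ i).1 (MCtx.hole i) (σ i).2.1 (σ i).2.2
  | temp : MTyping σ ∅ MCtx.nil ∅ ∅
  | tint {a b : P} {m : M} (hab : a ≠ b) :
      MTyping σ {a, b} (MCtx.act a b m)
        {Label.out a b m, Label.inp a b m} {Label.out a b m, Label.inp a b m}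
  | tseq {Γ1 Γ2 : Set P} {c1 c2 : MCtx P M} {φ1 φ2 Λ1 Λ2 : Set (Label P M)} :
      MTyping σ Γ1 c1 φ1 Λ1 → MTyping σ Γ2 c2 φ2 Λ2 →
      MTyping σ (Γ1 ∪ Γ2) (MCtx.seq c1 c2) (φ1 ∪ lminus φ2 Γ1) (Λ2 ∪ lminus Λ1 Γ2)
  | tpar {Γ1 Γ2 : Set P} {c1 c2 : MCtx P M} {φ1 φ2 Λ1 Λ2 : Set (Label P M)} :
      MTyping σ Γ1 c1 φ1 Λ1 → MTyping σ Γ2 c2 φ2 Λ2 → Γ1 ∩ Γ2 = ∅ →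
      MTyping σ (Γ1 ∪ Γ2) (MCtx.par c1 c2) (φ1 ∪ φ2) (Λ1 ∪ Λ2)
  | tch {Γ : Set P} {c1 c2 : MCtx P M} {φ1 φ2 Λ1 Λ2 : Set (Label P M)} :
      MTyping σ Γ c1 φ1 Λ1 → MTyping σ Γ c2 φ2 Λ2 → compch φ1 φ2 Γ →
      MTyping σ Γ (MCtx.cho c1 c2) (φ1 ∪ φ2) (Λ1 ∪ Λ2)

/-!
Induction on typing derivations shows that a typing `Γ ⊢ G : ⟨φ, Λ⟩` guarantees that `⟦G⟧` is
defined and that, for every participant `A`, the labels of the minimal events of `⟦G⟧↾A` are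
exactly `φ̂(A)`. Conditions (1) and (2) of `compch(φ1,φ2,Γ)` are then literally the conditions
of well-branchedness for `⟦G1⟧` and `⟦G2⟧`. The only delicate case is sequential composition:
an event of `G2` is minimal for `A` in `G1;G2` exactly when `A ∉ Γ1`, because every maximal
configuration of `⟦G1⟧` contains an event of each participant of `Γ1`, and the induction keeps
track of that fact as well.
-/

theorem encSet_injOn : Set.InjOn encSet {x | x.Finite} := by
  intro x (hx : x.Finite) y (hy : y.Finite) h
  rw [encSet, dif_pos hx, encSet, dif_pos hy] at h
  rw [← hx.coe_toFinset, ← hy.coe_toFinset, Finset.geomSum_injective le_rfl h]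

theorem tagL_injective : Function.Injective tagL := fun e f h => by
  simpa [tagL] using h

theorem tagR_injective : Function.Injective tagR := fun e f h => by
  simpa [tagR] using h

@[simp] theorem tagC_inj {k k' e f : ℕ} : tagC k e = tagC k' f ↔ k = k' ∧ e = f := by
  simp [tagC]

theorem tagC_mem_image_tagC {k k' e : ℕ} {z : Set ℕ} :
    tagC k e ∈ tagC k' '' z ↔ k' = k ∧ e ∈ z := by
  simp [and_comm]

@[simp] theorem tagL_ne_tagR {e f : ℕ} : tagL e ≠ tagR f := by
  simp [tagL, tagR]

@[simp] theorem tagR_ne_tagL {e f : ℕ} : tagR e ≠ tagL f :=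
  tagL_ne_tagR.symm

@[simp] theorem tagL_ne_tagC {e k f : ℕ} : tagL e ≠ tagC k f := by
  simp [tagL, tagC]

@[simp] theorem tagC_ne_tagL {e k f : ℕ} : tagC k f ≠ tagL e :=
  tagL_ne_tagC.symm

namespace ES

variable {E F : ES P M} {t : ℕ → ℕ} {x y : Set ℕ}

theorem config_empty (E : ES P M) : E.Config ∅ :=
  ⟨Set.empty_subset _, by simp, by simp⟩

theorem Config.union (hs : Std.Symm E.conf) (hx : E.Config x) (hy : E.Config y)
    (hxy : ∀ e ∈ x, ∀ f ∈ y, ¬ E.conf e f) : E.Config (x ∪ y) := by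
  refine ⟨Set.union_subset hx.1 hy.1, ?_, ?_⟩
  · rintro e (he | he) f hf hfe
    exacts [Or.inl (hx.2.1 e he f hf hfe), Or.inr (hy.2.1 e he f hf hfe)]
  · rintro e (he | he) f (hf | hf) hc
    · exact hx.2.2 e he f hf hc
    · exact hxy e he f hf hc
    · exact hxy f hf e he (hs.symm e f hc)
    · exact hy.2.2 e he f hf hc

theorem exists_maxC_superset (hE : E.ev.Finite) (hx : E.Config x) : ∃ z ∈ E.MaxC, x ⊆ z := by
  have hfin : {z | E.Config z}.Finite := hE.finite_subsets.subset fun z hz => hz.1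
  obtain ⟨z, hxz, hz, hmax⟩ := hfin.exists_le_maximal hx
  exact ⟨z, ⟨hz, fun w hw hzw => (hmax hw hzw).antisymm hzw⟩, hxz⟩

theorem mem_proj_minEv {A : P} {e : ℕ} : e ∈ (E.proj A).minEv ↔
    e ∈ E.ev ∧ (E.lbl e).sbj = A ∧ ∀ f ∈ E.ev, (E.lbl f).sbj = A → E.le f e → f = e := by
  simp only [minEv, minIn, proj, Set.mem_ofPred_eq]
  constructor
  · rintro ⟨⟨he, hA⟩, hmin⟩
    exact ⟨he, hA, fun f hf hfA hfe => hmin f ⟨hf, hfA⟩ ⟨hfe, ⟨hf, hfA⟩, he, hA⟩⟩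
  · rintro ⟨he, hA, hmin⟩
    exact ⟨⟨he, hA⟩, fun f hf hfe => hmin f hf.1 hf.2 hfe.1⟩

structure IsHom (F E : ES P M) (t : ℕ → ℕ) : Prop where
  mem_ev : ∀ e ∈ F.ev, t e ∈ E.ev
  le : ∀ e ∈ F.ev, ∀ f ∈ F.ev, F.le e f → E.le (t e) (t f)
  conf : ∀ e ∈ F.ev, ∀ f ∈ F.ev, F.conf e f → E.conf (t e) (t f)
  lbl : ∀ e, E.lbl (t e) = F.lbl e

theorem IsHom.config_preimage (ht : F.IsHom E t) (hy : E.Config y) :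
    F.Config (F.ev ∩ t ⁻¹' y) :=
  ⟨Set.inter_subset_left,
    fun e he f hf hfe => ⟨hf, hy.2.1 _ he.2 _ (ht.mem_ev f hf) (ht.le f hf e he.1 hfe)⟩,
    fun e he f hf hc => hy.2.2 _ he.2 _ hf.2 (ht.conf e he.1 f hf.1 hc)⟩

theorem IsHom.preimage_mem_maxC (ht : F.IsHom E t) (hy : E.Config y)
    (hext : ∀ z, F.Config z → F.ev ∩ t ⁻¹' y ⊆ z → t '' z ⊆ y) :
    F.ev ∩ t ⁻¹' y ∈ F.MaxC :=
  ⟨ht.config_preimage hy, fun z hz hyz =>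
    Set.Subset.antisymm (fun e he => ⟨hz.1 he, hext z hz hyz ⟨e, he, rfl⟩⟩) hyz⟩

theorem IsHom.map_mem_proj_minEv_iff (ht : F.IsHom E t) (hinj : Function.Injective t)
    {A : P} {e : ℕ} (he : e ∈ F.ev)
    (hrefl : ∀ u ∈ E.ev, (E.lbl u).sbj = A → E.le u (t e) → ∃ g ∈ F.ev, u = t g ∧ F.le g e) :
    t e ∈ (E.proj A).minEv ↔ e ∈ (F.proj A).minEv := by
  simp only [mem_proj_minEv, ht.lbl]
  constructor
  · rintro ⟨-, hA, hmin⟩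
    exact ⟨he, hA, fun g hg hgA hge =>
      hinj (hmin _ (ht.mem_ev g hg) (by rwa [ht.lbl]) (ht.le g hg e he hge))⟩
  · rintro ⟨-, hA, hmin⟩
    refine ⟨ht.mem_ev e he, hA, fun u hu huA hue => ?_⟩
    obtain ⟨g, hg, rfl, hge⟩ := hrefl u hu huA hue
    rw [hmin g hg (by rwa [← ht.lbl]) hge]

theorem IsHom.exists_sbj_eq (ht : F.IsHom E t) (hxy : Set.MapsTo t x y) {A : P}
    (h : ∃ e ∈ x, (F.lbl e).sbj = A) : ∃ u ∈ y, (E.lbl u).sbj = A :=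
  let ⟨e, he, heA⟩ := h
  ⟨t e, hxy he, by rw [ht.lbl, heA]⟩

end ES

open ES

theorem minLblP_eq_image (E : ES P M) (A : P) : minLblP E A = E.lbl '' (E.proj A).minEv :=
  rfl

variable {E1 E2 : ES P M} {y z : Set ℕ}

section Tensor

theorem isHom_tensor_tagL : E1.IsHom (esTensor E1 E2) tagL :=
  ⟨fun e he => Or.inl ⟨e, he, rfl⟩, fun e he f hf h => Or.inl ⟨e, he, f, hf, h, rfl, rfl⟩,
    fun e he f hf h => Or.inl ⟨e, he, f, hf, h, rfl, rfl⟩, fun e => by simp [esTensor, tagL]⟩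

theorem isHom_tensor_tagR : E2.IsHom (esTensor E1 E2) tagR :=
  ⟨fun e he => Or.inr ⟨e, he, rfl⟩, fun e he f hf h => Or.inr ⟨e, he, f, hf, h, rfl, rfl⟩,
    fun e he f hf h => Or.inr ⟨e, he, f, hf, h, rfl, rfl⟩, fun e => by simp [esTensor, tagR]⟩

theorem tensor_le_tagL {u e : ℕ} (h : (esTensor E1 E2).le u (tagL e)) :
    ∃ g ∈ E1.ev, u = tagL g ∧ E1.le g e := by
  rcases h with ⟨g, hg, f, -, hgf, rfl, hf⟩ | ⟨_, _, _, _, _, _, hf⟩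
  · exact ⟨g, hg, rfl, tagL_injective hf ▸ hgf⟩
  · exact (tagL_ne_tagR hf).elim

theorem tensor_le_tagR {u e : ℕ} (h : (esTensor E1 E2).le u (tagR e)) :
    ∃ g ∈ E2.ev, u = tagR g ∧ E2.le g e := by
  rcases h with ⟨_, _, _, _, _, _, hf⟩ | ⟨g, hg, f, -, hgf, rfl, hf⟩
  · exact (tagR_ne_tagL hf).elim
  · exact ⟨g, hg, rfl, tagR_injective hf ▸ hgf⟩

theorem symm_conf_tensor (hs1 : Std.Symm E1.conf) (hs2 : Std.Symm E2.conf) :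
    Std.Symm (esTensor E1 E2).conf := by
  refine ⟨?_⟩
  rintro u v (⟨e, he, f, hf, hc, rfl, rfl⟩ | ⟨e, he, f, hf, hc, rfl, rfl⟩)
  · exact Or.inl ⟨f, hf, e, he, hs1.symm e f hc, rfl, rfl⟩
  · exact Or.inr ⟨f, hf, e, he, hs2.symm e f hc, rfl, rfl⟩

theorem tensor_config (hy : E1.Config y) (hz : E2.Config z) :
    (esTensor E1 E2).Config (tagL '' y ∪ tagR '' z) := by
  refine ⟨Set.union_subset ?_ ?_, ?_, ?_⟩
  · exact (Set.image_mono hy.1).trans Set.subset_union_left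
  · exact (Set.image_mono hz.1).trans Set.subset_union_right
  · rintro _ (⟨e, he, rfl⟩ | ⟨e, he, rfl⟩) u - hue
    · obtain ⟨g, hg, rfl, hge⟩ := tensor_le_tagL hue
      exact Or.inl ⟨g, hy.2.1 e he g hg hge, rfl⟩
    · obtain ⟨g, hg, rfl, hge⟩ := tensor_le_tagR hue
      exact Or.inr ⟨g, hz.2.1 e he g hg hge, rfl⟩
  · rintro u hu v hv (⟨e, -, f, -, hc, rfl, rfl⟩ | ⟨e, -, f, -, hc, rfl, rfl⟩)
    · rw [Set.mem_union, tagL_injective.mem_set_image] at hu hv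
      exact hy.2.2 e (hu.resolve_right (by simp)) f (hv.resolve_right (by simp)) hc
    · rw [Set.mem_union, tagR_injective.mem_set_image] at hu hv
      exact hz.2.2 e (hu.resolve_left (by simp)) f (hv.resolve_left (by simp)) hc

theorem maxC_tensor (hy : y ∈ (esTensor E1 E2).MaxC) :
    E1.ev ∩ tagL ⁻¹' y ∈ E1.MaxC ∧ E2.ev ∩ tagR ⁻¹' y ∈ E2.MaxC := by
  have hcover : y ⊆ tagL '' (E1.ev ∩ tagL ⁻¹' y) ∪ tagR '' (E2.ev ∩ tagR ⁻¹' y) := by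
    intro u hu
    rcases hy.1.1 hu with ⟨e, he, rfl⟩ | ⟨e, he, rfl⟩
    exacts [Or.inl ⟨e, ⟨he, hu⟩, rfl⟩, Or.inr ⟨e, ⟨he, hu⟩, rfl⟩]
  have hL := (isHom_tensor_tagL (E2 := E2)).config_preimage hy.1
  have hR := (isHom_tensor_tagR (E1 := E1)).config_preimage hy.1
  refine ⟨isHom_tensor_tagL.preimage_mem_maxC hy.1 fun z hz hyz => ?_,
    isHom_tensor_tagR.preimage_mem_maxC hy.1 fun z hz hyz => ?_⟩
  · refine Set.subset_union_left.trans (hy.2 _ (tensor_config hz hR) ?_).subset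
    exact hcover.trans (Set.union_subset_union_left _ (Set.image_mono hyz))
  · refine Set.subset_union_right.trans (hy.2 _ (tensor_config hL hz) ?_).subset
    exact hcover.trans (Set.union_subset_union_right _ (Set.image_mono hyz))

theorem minLblP_tensor (E1 E2 : ES P M) (A : P) :
    minLblP (esTensor E1 E2) A = minLblP E1 A ∪ minLblP E2 A := by
  have hL {e} (he : e ∈ E1.ev) :=
    (isHom_tensor_tagL (E2 := E2)).map_mem_proj_minEv_iff tagL_injective (A := A) he
      fun _ _ _ h => tensor_le_tagL h
  have hR {e} (he : e ∈ E2.ev) :=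
    (isHom_tensor_tagR (E1 := E1)).map_mem_proj_minEv_iff tagR_injective (A := A) he
      fun _ _ _ h => tensor_le_tagR h
  ext l
  simp only [minLblP_eq_image, Set.mem_union, Set.mem_image]
  constructor
  · rintro ⟨u, hu, rfl⟩
    rcases (mem_proj_minEv.1 hu).1 with ⟨e, he, rfl⟩ | ⟨e, he, rfl⟩
    · exact Or.inl ⟨e, (hL he).1 hu, (isHom_tensor_tagL.lbl e).symm⟩
    · exact Or.inr ⟨e, (hR he).1 hu, (isHom_tensor_tagR.lbl e).symm⟩
  · rintro (⟨e, he, rfl⟩ | ⟨e, he, rfl⟩)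
    · exact ⟨tagL e, (hL (mem_proj_minEv.1 he).1).2 he, isHom_tensor_tagL.lbl e⟩
    · exact ⟨tagR e, (hR (mem_proj_minEv.1 he).1).2 he, isHom_tensor_tagR.lbl e⟩

end Tensor

section Sum

theorem isHom_sum_tagL : E1.IsHom (esSum E1 E2) tagL :=
  { isHom_tensor_tagL with conf := fun e he f hf h => Or.inl (Or.inl ⟨e, he, f, hf, h, rfl, rfl⟩) }

theorem isHom_sum_tagR : E2.IsHom (esSum E1 E2) tagR :=
  { isHom_tensor_tagR with conf := fun e he f hf h => Or.inl (Or.inr ⟨e, he, f, hf, h, rfl, rfl⟩) }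

theorem symm_conf_sum (hs1 : Std.Symm E1.conf) (hs2 : Std.Symm E2.conf) :
    Std.Symm (esSum E1 E2).conf := by
  refine ⟨?_⟩
  rintro u v (h | ⟨e, he, f, hf, (⟨rfl, rfl⟩ | ⟨rfl, rfl⟩)⟩)
  · exact Or.inl ((symm_conf_tensor hs1 hs2).symm u v h)
  · exact Or.inr ⟨e, he, f, hf, Or.inr ⟨rfl, rfl⟩⟩
  · exact Or.inr ⟨e, he, f, hf, Or.inl ⟨rfl, rfl⟩⟩

theorem sum_config_tagL (hz : E1.Config z) : (esSum E1 E2).Config (tagL '' z) := by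
  have h := tensor_config (E2 := E2) hz (config_empty E2)
  rw [Set.image_empty, Set.union_empty] at h
  refine ⟨h.1, h.2.1, ?_⟩
  rintro u hu v hv (hc | ⟨e, -, f, -, ⟨-, rfl⟩ | ⟨rfl, -⟩⟩)
  · exact h.2.2 u hu v hv hc
  · simp at hv
  · simp at hu

theorem sum_config_tagR (hz : E2.Config z) : (esSum E1 E2).Config (tagR '' z) := by
  have h := tensor_config (E1 := E1) (config_empty E1) hz
  rw [Set.image_empty, Set.empty_union] at h
  refine ⟨h.1, h.2.1, ?_⟩
  rintro u hu v hv (hc | ⟨e, -, f, -, ⟨rfl, -⟩ | ⟨-, rfl⟩⟩)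
  · exact h.2.2 u hu v hv hc
  · simp at hu
  · simp at hv

theorem maxC_sum (hy : y ∈ (esSum E1 E2).MaxC) :
    E1.ev ∩ tagL ⁻¹' y ∈ E1.MaxC ∨ E2.ev ∩ tagR ⁻¹' y ∈ E2.MaxC := by
  by_cases hR : ∃ f ∈ E2.ev, tagR f ∈ y
  · right
    obtain ⟨f0, hf0, hf0y⟩ := hR
    have hcover : y ⊆ tagR '' (E2.ev ∩ tagR ⁻¹' y) := by
      intro u hu
      rcases hy.1.1 hu with ⟨e, he, rfl⟩ | ⟨e, he, rfl⟩
      · exact (hy.1.2.2 _ hu _ hf0y (Or.inr ⟨e, he, f0, hf0, Or.inl ⟨rfl, rfl⟩⟩)).elim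
      · exact ⟨e, ⟨he, hu⟩, rfl⟩
    exact isHom_sum_tagR.preimage_mem_maxC hy.1 fun z hz hyz =>
      (hy.2 _ (sum_config_tagR hz) (hcover.trans (Set.image_mono hyz))).subset
  · left
    push Not at hR
    have hcover : y ⊆ tagL '' (E1.ev ∩ tagL ⁻¹' y) := by
      intro u hu
      rcases hy.1.1 hu with ⟨e, he, rfl⟩ | ⟨e, he, rfl⟩
      · exact ⟨e, ⟨he, hu⟩, rfl⟩
      · exact (hR e he hu).elim
    exact isHom_sum_tagL.preimage_mem_maxC hy.1 fun z hz hyz =>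
      (hy.2 _ (sum_config_tagL hz) (hcover.trans (Set.image_mono hyz))).subset

theorem minLblP_sum (E1 E2 : ES P M) (A : P) :
    minLblP (esSum E1 E2) A = minLblP E1 A ∪ minLblP E2 A :=
  minLblP_tensor E1 E2 A

end Sum

section Seq

theorem isHom_seq_tagL : E1.IsHom (esSeq E1 E2) tagL :=
  ⟨fun e he => Or.inl ⟨e, he, rfl⟩, fun e he f hf h => Or.inl ⟨e, he, f, hf, h, rfl, rfl⟩,
    fun e he f hf h => Or.inl ⟨e, he, f, hf, h, rfl, rfl⟩, fun e => by simp [esSeq, tagL]⟩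

theorem isHom_seq_tagC {x : Set ℕ} (hx : x ∈ E1.MaxC) :
    E2.IsHom (esSeq E1 E2) (tagC (encSet x)) :=
  ⟨fun e he => Or.inr ⟨x, hx, e, he, rfl⟩,
    fun e he f hf h => Or.inr (Or.inl ⟨x, hx, e, he, f, hf, h, rfl, rfl⟩),
    fun e he f hf h => Or.inr (Or.inl ⟨x, hx, e, he, f, hf, h, rfl, rfl⟩),
    fun e => by simp [esSeq, tagC]⟩

theorem seq_le_tagL {u e : ℕ} (h : (esSeq E1 E2).le u (tagL e)) :
    ∃ g ∈ E1.ev, u = tagL g ∧ E1.le g e := by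
  rcases h with ⟨g, hg, f, -, hgf, rfl, hf⟩ | ⟨_, _, _, _, _, _, _, _, hf⟩ |
    ⟨_, _, _, _, _, _, _, _, hf⟩
  · exact ⟨g, hg, rfl, tagL_injective hf ▸ hgf⟩
  · exact (tagL_ne_tagC hf).elim
  · exact (tagL_ne_tagC hf).elim

theorem seq_le_tagC (hE1 : E1.ev.Finite) {x : Set ℕ} (hx : x ∈ E1.MaxC) {u f : ℕ}
    (h : (esSeq E1 E2).le u (tagC (encSet x) f)) :
    (∃ g ∈ E2.ev, u = tagC (encSet x) g ∧ E2.le g f) ∨ ∃ e ∈ x, u = tagL e := by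
  rcases h with ⟨_, _, _, _, _, _, hv⟩ | ⟨x', -, g, hg, f', -, hgf, rfl, hv⟩ |
    ⟨x', hx', e, he, f', -, -, rfl, hv⟩
  · exact (tagC_ne_tagL hv).elim
  · obtain ⟨hk, rfl⟩ := tagC_inj.1 hv
    exact Or.inl ⟨g, hg, by rw [hk], hgf⟩
  · have hxx' : x = x' :=
      encSet_injOn (hE1.subset hx.1.1) (hE1.subset hx'.1.1) (tagC_inj.1 hv).1
    exact Or.inr ⟨e, hxx' ▸ he, rfl⟩

theorem symm_conf_seq (hs1 : Std.Symm E1.conf) (hs2 : Std.Symm E2.conf) :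
    Std.Symm (esSeq E1 E2).conf := by
  refine ⟨?_⟩
  rintro u v (⟨e, he, f, hf, hc, rfl, rfl⟩ | ⟨x, hx, e, he, f, hf, hc, rfl, rfl⟩ |
    ⟨x, hx, x', hx', hne, e, he, f, hf, rfl, rfl⟩ |
    ⟨x, hx, e, he, hce, f, hf, ⟨rfl, rfl⟩ | ⟨rfl, rfl⟩⟩)
  · exact Or.inl ⟨f, hf, e, he, hs1.symm e f hc, rfl, rfl⟩
  · exact Or.inr (Or.inl ⟨x, hx, f, hf, e, he, hs2.symm e f hc, rfl, rfl⟩)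
  · exact Or.inr (Or.inr (Or.inl ⟨x', hx', x, hx, hne.symm, f, hf, e, he, rfl, rfl⟩))
  · exact Or.inr (Or.inr (Or.inr ⟨x, hx, e, he, hce, f, hf, Or.inr ⟨rfl, rfl⟩⟩))
  · exact Or.inr (Or.inr (Or.inr ⟨x, hx, e, he, hce, f, hf, Or.inl ⟨rfl, rfl⟩⟩))

theorem seq_config (hE1 : E1.ev.Finite) {x : Set ℕ} (hx : x ∈ E1.MaxC) (hz : E2.Config z) :
    (esSeq E1 E2).Config (tagL '' x ∪ tagC (encSet x) '' z) := by
  have hinj : ∀ {x'}, x' ∈ E1.MaxC → encSet x = encSet x' → x = x' := fun hx' h =>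
    encSet_injOn (hE1.subset hx.1.1) (hE1.subset hx'.1.1) h
  refine ⟨Set.union_subset ?_ ?_, ?_, ?_⟩
  · rintro _ ⟨e, he, rfl⟩
    exact Or.inl ⟨e, hx.1.1 he, rfl⟩
  · rintro _ ⟨f, hf, rfl⟩
    exact Or.inr ⟨x, hx, f, hz.1 hf, rfl⟩
  · rintro _ (⟨e, he, rfl⟩ | ⟨f, hf, rfl⟩) u - hu
    · obtain ⟨g, hg, rfl, hge⟩ := seq_le_tagL hu
      exact Or.inl ⟨g, hx.1.2.1 e he g hg hge, rfl⟩
    · rcases seq_le_tagC hE1 hx hu with ⟨g, hg, rfl, hgf⟩ | ⟨e, he, rfl⟩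
      · exact Or.inr ⟨g, hz.2.1 f hf g hg hgf, rfl⟩
      · exact Or.inl ⟨e, he, rfl⟩
  · rintro u hu v hv (⟨e, -, f, -, hc, rfl, rfl⟩ | ⟨x', -, e, -, f, -, hc, rfl, rfl⟩ |
      ⟨x', hx', x'', hx'', hne, e, -, f, -, rfl, rfl⟩ |
      ⟨x', hx', e, -, ⟨e', he', hc⟩, f, -, ⟨rfl, rfl⟩ | ⟨rfl, rfl⟩⟩) <;>
      rw [Set.mem_union] at hu hv <;>
      simp only [tagL_injective.mem_set_image, tagC_mem_image_tagC] at hu hv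
    · exact hx.1.2.2 e (hu.resolve_right (by simp)) f (hv.resolve_right (by simp)) hc
    · exact hz.2.2 e (hu.resolve_left (by simp)).2 f (hv.resolve_left (by simp)).2 hc
    · exact hne ((hinj hx' (hu.resolve_left (by simp)).1).symm.trans
        (hinj hx'' (hv.resolve_left (by simp)).1))
    · exact hx.1.2.2 e (hu.resolve_right (by simp)) e'
        (hinj hx' (hv.resolve_left (by simp)).1 ▸ he') hc
    · exact hx.1.2.2 e (hv.resolve_right (by simp)) e'
        (hinj hx' (hu.resolve_left (by simp)).1 ▸ he') hc

theorem exists_maxC_of_seq_config (hE1 : E1.ev.Finite) (hs1 : Std.Symm E1.conf)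
    (hy : (esSeq E1 E2).Config y) :
    ∃ x ∈ E1.MaxC, E1.ev ∩ tagL ⁻¹' y ⊆ x ∧
      ∀ x' ∈ E1.MaxC, ∀ f ∈ E2.ev, tagC (encSet x') f ∈ y → encSet x' = encSet x := by
  have hyL := (isHom_seq_tagL (E2 := E2)).config_preimage hy
  by_cases hcopy : ∃ x ∈ E1.MaxC, ∃ f ∈ E2.ev, tagC (encSet x) f ∈ y
  · obtain ⟨x, hx, f0, hf0, hf0y⟩ := hcopy
    -- the copy attached to `x` conflicts with every event of `E1` in conflict with `x`,
    -- so the `E1`-part of `y` is compatible with `x`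
    have hunion := hyL.union hs1 hx.1 fun e he e' he' hc => hy.2.2 _ he.2 _ hf0y
      (Or.inr (Or.inr (Or.inr ⟨x, hx, e, he.1, ⟨e', he', hc⟩, f0, hf0, Or.inl ⟨rfl, rfl⟩⟩)))
    refine ⟨x, hx, Set.subset_union_left.trans (hx.2 _ hunion Set.subset_union_right).subset,
      fun x' hx' f hf hfy => ?_⟩
    by_contra hne
    exact hy.2.2 _ hfy _ hf0y (Or.inr (Or.inr (Or.inl
      ⟨x', hx', x, hx, fun h => hne (congrArg encSet h), f, hf, f0, hf0, rfl, rfl⟩)))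
  · push Not at hcopy
    obtain ⟨x, hx, hyx⟩ := exists_maxC_superset hE1 hyL
    exact ⟨x, hx, hyx, fun x' hx' f hf hfy => (hcopy x' hx' f hf hfy).elim⟩

theorem maxC_seq (hE1 : E1.ev.Finite) (hs1 : Std.Symm E1.conf)
    (hy : y ∈ (esSeq E1 E2).MaxC) :
    ∃ x ∈ E1.MaxC, ∃ z ∈ E2.MaxC, Set.MapsTo tagL x y ∧ Set.MapsTo (tagC (encSet x)) z y := by
  obtain ⟨x, hx, hyx, hcopy⟩ := exists_maxC_of_seq_config hE1 hs1 hy.1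
  set yC := E2.ev ∩ tagC (encSet x) ⁻¹' y
  have hcover : ∀ z, yC ⊆ z → y ⊆ tagL '' x ∪ tagC (encSet x) '' z := by
    intro z hz u hu
    rcases hy.1.1 hu with ⟨e, he, rfl⟩ | ⟨x', hx', f, hf, rfl⟩
    · exact Or.inl ⟨e, hyx ⟨he, hu⟩, rfl⟩
    · have hk := hcopy x' hx' f hf hu
      rw [hk] at hu ⊢
      exact Or.inr ⟨f, hz ⟨hf, hu⟩, rfl⟩
  have hext : ∀ z, E2.Config z → yC ⊆ z → tagL '' x ∪ tagC (encSet x) '' z ⊆ y :=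
    fun z hz hyz => (hy.2 _ (seq_config hE1 hx hz) (hcover z hyz)).subset
  have hyC : E2.Config yC := (isHom_seq_tagC hx).config_preimage hy.1
  exact ⟨x, hx, yC, (isHom_seq_tagC hx).preimage_mem_maxC hy.1 fun z hz hyz =>
      Set.subset_union_right.trans (hext z hz hyz),
    fun e he => hext yC hyC le_rfl (Or.inl ⟨e, he, rfl⟩), fun _ hf => hf.2⟩

theorem minLblP_seq_of_forall_maxC {A : P} (hA : ∀ x ∈ E1.MaxC, ∃ e ∈ x, (E1.lbl e).sbj = A) :
    minLblP (esSeq E1 E2) A = minLblP E1 A := by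
  have hL {e} (he : e ∈ E1.ev) := (isHom_seq_tagL (E2 := E2)).map_mem_proj_minEv_iff
    tagL_injective (A := A) he fun _ _ _ h => seq_le_tagL h
  ext l
  simp only [minLblP_eq_image, Set.mem_image]
  constructor
  · rintro ⟨u, hu, rfl⟩
    rcases (mem_proj_minEv.1 hu).1 with ⟨e, he, rfl⟩ | ⟨x, hx, f, hf, rfl⟩
    · exact ⟨e, (hL he).1 hu, (isHom_seq_tagL.lbl e).symm⟩
    · obtain ⟨e, hex, heA⟩ := hA x hx
      obtain ⟨-, hfA, hmin⟩ := mem_proj_minEv.1 hu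
      rw [(isHom_seq_tagC hx).lbl] at hfA
      have hle : (esSeq E1 E2).le (tagL e) (tagC (encSet x) f) :=
        Or.inr (Or.inr ⟨x, hx, e, hex, f, hf, heA.trans hfA.symm, rfl, rfl⟩)
      exact (tagL_ne_tagC (hmin _ (isHom_seq_tagL.mem_ev e (hx.1.1 hex))
        (by rw [isHom_seq_tagL.lbl, heA]) hle)).elim
  · rintro ⟨e, he, rfl⟩
    exact ⟨tagL e, (hL (mem_proj_minEv.1 he).1).2 he, isHom_seq_tagL.lbl e⟩

theorem minLblP_seq_of_forall_ne (hE1 : E1.ev.Finite) {A : P}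
    (hA : ∀ e ∈ E1.ev, (E1.lbl e).sbj ≠ A) :
    minLblP (esSeq E1 E2) A = minLblP E2 A := by
  have hC {x} (hx : x ∈ E1.MaxC) {f} (hf : f ∈ E2.ev) :=
    (isHom_seq_tagC (E2 := E2) hx).map_mem_proj_minEv_iff (fun _ _ h => (tagC_inj.1 h).2)
      (A := A) hf fun u _ huA h => (seq_le_tagC hE1 hx h).resolve_right fun ⟨e, he, hu⟩ =>
        hA e (hx.1.1 he) (by rwa [hu, isHom_seq_tagL.lbl] at huA)
  ext l
  simp only [minLblP_eq_image, Set.mem_image]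
  constructor
  · rintro ⟨u, hu, rfl⟩
    obtain ⟨hu', huA, -⟩ := mem_proj_minEv.1 hu
    rcases hu' with ⟨e, he, rfl⟩ | ⟨x, hx, f, hf, rfl⟩
    · exact (hA e he (by rwa [isHom_seq_tagL.lbl] at huA)).elim
    · exact ⟨f, (hC hx hf).1 hu, ((isHom_seq_tagC hx).lbl f).symm⟩
  · rintro ⟨f, hf, rfl⟩
    obtain ⟨x, hx, -⟩ := exists_maxC_superset hE1 (config_empty E1)
    exact ⟨_, (hC hx (mem_proj_minEv.1 hf).1).2 hf, (isHom_seq_tagC hx).lbl f⟩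

end Seq

section Typing

variable {Γ Γ1 Γ2 : Set P} {φ φ1 φ2 : Set (Label P M)} {A : P}

theorem hat_union (U V : Set (Label P M)) (A : P) : hat (U ∪ V) A = hat U A ∪ hat V A :=
  Set.union_inter_distrib_right U V _

theorem hat_lminus_of_mem (h : A ∈ Γ) : hat (lminus φ Γ) A = ∅ :=
  Set.eq_empty_of_forall_notMem fun _ ⟨⟨_, hl⟩, hA⟩ => hl (hA ▸ h)

theorem hat_lminus_of_notMem (h : A ∉ Γ) : hat (lminus φ Γ) A = hat φ A := by
  ext l
  exact ⟨fun ⟨⟨hl, _⟩, hA⟩ => ⟨hl, hA⟩, fun ⟨hl, hA⟩ => ⟨⟨hl, hA ▸ h⟩, hA⟩⟩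

structure Realizes (Γ : Set P) (φ : Set (Label P M)) (E : ES P M) : Prop where
  finite : E.ev.Finite
  conf_symm : Std.Symm E.conf
  minLblP_eq : ∀ A, minLblP E A = hat φ A
  sbj_mem : ∀ e ∈ E.ev, (E.lbl e).sbj ∈ Γ
  maxC_sbj : ∀ x ∈ E.MaxC, ∀ A ∈ Γ, ∃ e ∈ x, (E.lbl e).sbj = A

theorem Realizes.hat_eq_empty {E : ES P M} (I : Realizes Γ φ E) (hA : A ∉ Γ) :
    hat φ A = ∅ := by
  rw [← I.minLblP_eq]
  refine Set.eq_empty_of_forall_notMem ?_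
  rintro _ ⟨e, he, rfl⟩
  obtain ⟨he, heA, -⟩ := mem_proj_minEv.1 he
  exact hA (heA ▸ I.sbj_mem e he)

theorem Realizes.disjoint_lblSet (I1 : Realizes Γ1 φ1 E1) (I2 : Realizes Γ2 φ2 E2)
    (h : Γ1 ∩ Γ2 = ∅) : Disjoint E1.lblSet E2.lblSet := by
  rw [Set.disjoint_left]
  rintro _ ⟨e, he, rfl⟩ ⟨f, hf, hfe⟩
  exact Set.eq_empty_iff_forall_notMem.1 h _ ⟨I1.sbj_mem e he, hfe ▸ I2.sbj_mem f hf⟩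

theorem realizes_empty [Nonempty P] [Nonempty M] :
    Realizes (∅ : Set P) (∅ : Set (Label P M)) esEmpty := by
  refine ⟨Set.finite_empty, ⟨fun _ _ h => h⟩, fun A => ?_, fun _ h => h.elim,
    fun _ _ _ h => h.elim⟩
  ext l
  simp [minLblP_eq_image, mem_proj_minEv, esEmpty, hat]

theorem realizes_act {a b : P} {m : M} (hab : a ≠ b) :
    Realizes {a, b} {Label.out a b m, Label.inp a b m} (esAct a b m) := by
  have hlbl0 : (esAct a b m).lbl 0 = Label.out a b m := by simp [esAct]
  have hlbl1 : (esAct a b m).lbl 1 = Label.inp a b m := by simp [esAct]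
  have hmin : ∀ A, ((esAct a b m).proj A).minEv =
      (esAct a b m).ev ∩ (esAct a b m).lbl ⁻¹' {l | l.sbj = A} := by
    intro A
    ext e
    rw [mem_proj_minEv]
    refine ⟨fun h => ⟨h.1, h.2.1⟩, fun ⟨he, hA⟩ => ⟨he, hA, ?_⟩⟩
    rintro f - hfA (⟨rfl, rfl⟩ | ⟨rfl, rfl⟩ | ⟨rfl, rfl⟩)
    · rfl
    · simp only [Set.mem_preimage, Set.mem_ofPred_eq, hlbl1, Label.sbj] at hA
      rw [hlbl0, Label.sbj] at hfA
      exact (hab (hfA.trans hA.symm)).elim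
    · rfl
  have hcfg : (esAct a b m).Config {0, 1} :=
    ⟨subset_rfl, fun _ _ _ hf _ => hf, fun _ _ _ _ h => h⟩
  refine ⟨(Set.finite_singleton 1).insert 0, ⟨fun _ _ h => h⟩, fun A => ?_, ?_, fun x hx A hA => ?_⟩
  · rw [minLblP_eq_image, hmin, Set.image_inter_preimage]
    change (esAct a b m).lbl '' {0, 1} ∩ _ = _
    rw [Set.image_pair, hlbl0, hlbl1]
    rfl
  · rintro e (rfl | rfl)
    · simp [hlbl0, Label.sbj]
    · simp [hlbl1, Label.sbj]
  · rw [← hx.2 _ hcfg hx.1.1]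
    rcases hA with rfl | rfl
    · exact ⟨0, Or.inl rfl, by rw [hlbl0]; rfl⟩
    · exact ⟨1, Or.inr rfl, by rw [hlbl1]; rfl⟩

theorem realizes_tensor (I1 : Realizes Γ1 φ1 E1) (I2 : Realizes Γ2 φ2 E2) :
    Realizes (Γ1 ∪ Γ2) (φ1 ∪ φ2) (esTensor E1 E2) := by
  refine ⟨(I1.finite.image tagL).union (I2.finite.image tagR),
    symm_conf_tensor I1.conf_symm I2.conf_symm, fun A => ?_, ?_, ?_⟩
  · rw [minLblP_tensor, I1.minLblP_eq, I2.minLblP_eq, hat_union]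
  · rintro _ (⟨e, he, rfl⟩ | ⟨e, he, rfl⟩)
    · rw [isHom_tensor_tagL.lbl]
      exact Or.inl (I1.sbj_mem e he)
    · rw [isHom_tensor_tagR.lbl]
      exact Or.inr (I2.sbj_mem e he)
  · rintro y hy A (hA | hA)
    · exact isHom_tensor_tagL.exists_sbj_eq (fun _ he => he.2)
        (I1.maxC_sbj _ (maxC_tensor hy).1 A hA)
    · exact isHom_tensor_tagR.exists_sbj_eq (fun _ he => he.2)
        (I2.maxC_sbj _ (maxC_tensor hy).2 A hA)

theorem realizes_sum (I1 : Realizes Γ φ1 E1) (I2 : Realizes Γ φ2 E2) :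
    Realizes Γ (φ1 ∪ φ2) (esSum E1 E2) := by
  refine ⟨(I1.finite.image tagL).union (I2.finite.image tagR),
    symm_conf_sum I1.conf_symm I2.conf_symm, fun A => ?_, ?_, fun y hy A hA => ?_⟩
  · rw [minLblP_sum, I1.minLblP_eq, I2.minLblP_eq, hat_union]
  · rintro _ (⟨e, he, rfl⟩ | ⟨e, he, rfl⟩)
    · rw [isHom_sum_tagL.lbl]
      exact I1.sbj_mem e he
    · rw [isHom_sum_tagR.lbl]
      exact I2.sbj_mem e he
  · rcases maxC_sum hy with hL | hR
    · exact isHom_sum_tagL.exists_sbj_eq (fun _ he => he.2) (I1.maxC_sbj _ hL A hA)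
    · exact isHom_sum_tagR.exists_sbj_eq (fun _ he => he.2) (I2.maxC_sbj _ hR A hA)

theorem realizes_seq (I1 : Realizes Γ1 φ1 E1) (I2 : Realizes Γ2 φ2 E2) :
    Realizes (Γ1 ∪ Γ2) (φ1 ∪ lminus φ2 Γ1) (esSeq E1 E2) := by
  have hmaxC : E1.MaxC.Finite := I1.finite.finite_subsets.subset fun x hx => hx.1.1
  refine ⟨(I1.finite.image tagL).union ((hmaxC.biUnion fun x _ =>
      I2.finite.image (tagC (encSet x))).subset ?_),
    symm_conf_seq I1.conf_symm I2.conf_symm, fun A => ?_, ?_, fun y hy => ?_⟩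
  · rintro _ ⟨x, hx, e, he, rfl⟩
    exact Set.mem_biUnion hx ⟨e, he, rfl⟩
  · rw [hat_union]
    by_cases hA : A ∈ Γ1
    · rw [minLblP_seq_of_forall_maxC fun x hx => I1.maxC_sbj x hx A hA, I1.minLblP_eq,
        hat_lminus_of_mem hA, Set.union_empty]
    · rw [minLblP_seq_of_forall_ne I1.finite (A := A) fun e he heA => hA (heA ▸ I1.sbj_mem e he),
        I2.minLblP_eq, hat_lminus_of_notMem hA, I1.hat_eq_empty hA, Set.empty_union]
  · rintro _ (⟨e, he, rfl⟩ | ⟨x, hx, f, hf, rfl⟩)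
    · rw [isHom_seq_tagL.lbl]
      exact Or.inl (I1.sbj_mem e he)
    · rw [(isHom_seq_tagC hx).lbl]
      exact Or.inr (I2.sbj_mem f hf)
  · obtain ⟨x, hx, z, hz, hxy, hzy⟩ := maxC_seq I1.finite I1.conf_symm hy
    rintro A (hA | hA)
    · exact isHom_seq_tagL.exists_sbj_eq hxy (I1.maxC_sbj x hx A hA)
    · exact (isHom_seq_tagC hx).exists_sbj_eq hzy (I2.maxC_sbj z hz A hA)

theorem Realizes.wb_of_compch (I1 : Realizes Γ φ1 E1) (I2 : Realizes Γ φ2 E2) (hc : compch φ1 φ2 Γ) :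
    wb E1 E2 := by
  simp only [wb, active, passive, I1.minLblP_eq, I2.minLblP_eq]
  obtain ⟨A, -, ⟨hout, hne1, hne2⟩, huniq, hpass⟩ := hc
  refine ⟨A, ⟨hne1, hne2, hout.1, hout.2⟩, fun A' ⟨h1, h2, h3, h4⟩ => ?_, fun B hB => ?_⟩
  · refine huniq A' ?_ ⟨⟨h3, h4⟩, h1, h2⟩
    by_contra hA'
    exact h1 (I1.hat_eq_empty hA')
  · by_cases hBΓ : B ∈ Γ
    · obtain ⟨hin, hiff⟩ := hpass B hBΓ hB
      exact ⟨hin.1, hin.2, hiff⟩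
    · simp [I1.hat_eq_empty hBΓ, I2.hat_eq_empty hBΓ]

theorem Typing.exists_gsem [Nonempty P] [Nonempty M] {g : GC P M} {Λ : Set (Label P M)}
    (h : Typing Γ g φ Λ) : ∃ E, gsem g = some E ∧ Realizes Γ φ E := by
  induction h with
  | temp => exact ⟨esEmpty, rfl, realizes_empty⟩
  | @tint a b m hab => exact ⟨esAct a b m, by simp [gsem, hab], realizes_act hab⟩
  | tseq _ _ ih1 ih2 =>
    obtain ⟨E1, hE1, I1⟩ := ih1
    obtain ⟨E2, hE2, I2⟩ := ih2
    exact ⟨esSeq E1 E2, by simp [gsem, hE1, hE2], realizes_seq I1 I2⟩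
  | tpar _ _ hdisj ih1 ih2 =>
    obtain ⟨E1, hE1, I1⟩ := ih1
    obtain ⟨E2, hE2, I2⟩ := ih2
    exact ⟨esTensor E1 E2, by simp [gsem, hE1, hE2, I1.disjoint_lblSet I2 hdisj],
      realizes_tensor I1 I2⟩
  | tch _ _ hc ih1 ih2 =>
    obtain ⟨E1, hE1, I1⟩ := ih1
    obtain ⟨E2, hE2, I2⟩ := ih2
    exact ⟨esSum E1 E2, by simp [gsem, hE1, hE2, I1.wb_of_compch I2 hc], realizes_sum I1 I2⟩

end Typing

/-- Compatibility implies well-branchedness: if `Π ⊢ G1 : ⟨φ1,Λ1⟩`, `Π ⊢ G2 : ⟨φ2,Λ2⟩`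
and `compch(φ1,φ2,Π)` hold, then `⟦G1⟧` and `⟦G2⟧` are well-branched, and consequently
`⟦G1+G2⟧ = ⟦G1⟧+⟦G2⟧ ≠ ⊥`. -/
theorem compch_wb {P M : Type} [Infinite P] [Infinite M]
    {Γ : Set P} {G1 G2 : GC P M} {φ1 φ2 Λ1 Λ2 : Set (Label P M)}
    (h1 : Typing Γ G1 φ1 Λ1) (h2 : Typing Γ G2 φ2 Λ2) (hc : compch φ1 φ2 Γ) :
    ∃ E1 E2 : ES P M, gsem G1 = some E1 ∧ gsem G2 = some E2 ∧ wb E1 E2 ∧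
      gsem (GC.cho G1 G2) = some (esSum E1 E2) := by
  obtain ⟨E1, hE1, I1⟩ := h1.exists_gsem
  obtain ⟨E2, hE2, I2⟩ := h2.exists_gsem
  have hwb := I1.wb_of_compch I2 hc
  exact ⟨E1, E2, hE1, hE2, hwb, by simp [gsem, hE1, hE2, hwb]⟩

end Choreo
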